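/- arXiv:2302.02501 — 3 statements merged into one kernel-verified Lean document; each statement's English description precedes it below -/
import Mathlib

section
/- Let ρ: (σ_1, t^{(1)}, ν_1), …, (σ_n, t^{(n)}, ν_n) be a run of a race-free TPO, let j be a position, and let c be a clock referred to in the guard G(σ_j). Define E = { e ∈ Π | c ∈ R(e) and e ≺ σ_j }. Then: (a) if E = ∅, no event σ_k with k < j resets c (i.e., c ∉ R(σ_k) for all k < j); (b) if E ≠ ∅, then E has a ≺-maximum element, that element occurs in the run at some position m < j, and c ∉ R(σ_k) for all k with m < k < j; that is, the last reset of c before position j in the run occurs exactly at the ≺-maximum element of E. -/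
/-- Comparison operators appearing in atomic clock constraints. -/
inductive Cmp where
  | le : Cmp
  | ge : Cmp

/-- `Cmp.holds cmp x a` means `x ⋈ a`. -/
def Cmp.holds : Cmp → ℝ → ℝ → Prop
  | .le, x, a => x ≤ a
  | .ge, x, a => a ≤ x

/-- A timed partial order over events `E` with clocks `C`:
a strict partial order `prec`, a guard map assigning to each event a finite
conjunction (list) of atomic constraints `c ⋈ a` with `a ≥ 0`, and a reset map. -/
structure TPO (E C : Type) where
  prec : E → E → Prop
  prec_irrefl : ∀ e, ¬ prec e e
  prec_trans : ∀ e₁ e₂ e₃, prec e₁ e₂ → prec e₂ e₃ → prec e₁ e₃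
  guard : E → List (C × Cmp × ℝ)
  guard_nonneg : ∀ e, ∀ p ∈ guard e, (0 : ℝ) ≤ p.2.2
  reset : E → Set C

/-- An event is dependent on a clock iff its guard refers to the clock or resets it. -/
def TPO.Dependent {E C : Type} (T : TPO E C) (e : E) (c : C) : Prop :=
  (∃ p ∈ T.guard e, p.1 = c) ∨ c ∈ T.reset e

/-- A TPO is race-free iff any two distinct events dependent on a common clock
are comparable in the partial order. -/
def TPO.RaceFree {E C : Type} (T : TPO E C) : Prop :=
  ∀ (c : C) (e₁ e₂ : E), T.Dependent e₁ c → T.Dependent e₂ c → e₁ ≠ e₂ →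
    T.prec e₁ e₂ ∨ T.prec e₂ e₁

/-- `T.IsRun n σ t ν`: positions `1,…,n` of `σ` enumerate the events without
repetition, `t 0 = 0`, `ν 0 ≡ 0`, timestamps are nondecreasing, the event
sequence is a linearization of `prec`, at each step the time-advanced valuation
satisfies the guard, and then the clocks in the reset set are set to `0`. -/
def TPO.IsRun {E C : Type} (T : TPO E C) (n : ℕ)
    (σ : ℕ → E) (t : ℕ → ℝ) (ν : ℕ → C → ℝ) : Prop :=
  t 0 = 0 ∧
  (∀ c, ν 0 c = 0) ∧
  Set.BijOn σ (Set.Icc 1 n) (Set.univ : Set E) ∧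
  (∀ j, 1 ≤ j → j ≤ n → t (j - 1) ≤ t j) ∧
  (∀ a b, 1 ≤ a → a ≤ n → 1 ≤ b → b ≤ n → T.prec (σ a) (σ b) → a < b) ∧
  (∀ j, 1 ≤ j → j ≤ n → ∀ p ∈ T.guard (σ j),
      p.2.1.holds (ν (j - 1) p.1 + (t j - t (j - 1))) p.2.2) ∧
  (∀ j, 1 ≤ j → j ≤ n → ∀ c : C,
      (c ∈ T.reset (σ j) → ν j c = 0) ∧
      (c ∉ T.reset (σ j) → ν j c = ν (j - 1) c + (t j - t (j - 1))))

/-- A timed trace `τ` is compatible with the TPO iff there exist clock valuations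
making its induced (increasing-timestamp) sequence a run. -/
def TPO.Compatible {E C : Type} [Fintype E] (T : TPO E C) (τ : E → ℝ) : Prop :=
  ∃ (σ : ℕ → E) (t : ℕ → ℝ) (ν : ℕ → C → ℝ),
    (∀ j, 1 ≤ j → j ≤ Fintype.card E → t j = τ (σ j)) ∧
    (∀ j k, 1 ≤ j → j < k → k ≤ Fintype.card E → t j < t k) ∧
    T.IsRun (Fintype.card E) σ t ν

/-
The run lists the events as a linear extension of `≺`, and race-freeness makes any two
events that depend on `c` comparable; hence among the events depending on `c`, the run
order and `≺` agree. The ≺-maximum of `E` is therefore the last reset of `c` before `j`.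
-/

namespace TPO

variable {E C : Type} {T : TPO E C} {n : ℕ} {σ : ℕ → E} {t : ℕ → ℝ} {ν : ℕ → C → ℝ}

theorem IsRun.lt_of_prec (hrun : T.IsRun n σ t ν) {a b : ℕ} (ha : 1 ≤ a) (han : a ≤ n)
    (hb : 1 ≤ b) (hbn : b ≤ n) (h : T.prec (σ a) (σ b)) : a < b :=
  hrun.2.2.2.2.1 a b ha han hb hbn h

theorem IsRun.exists_index_lt_of_prec (hrun : T.IsRun n σ t ν) {j : ℕ} (hj1 : 1 ≤ j)
    (hjn : j ≤ n) {e : E} (he : T.prec e (σ j)) : ∃ k, 1 ≤ k ∧ k < j ∧ σ k = e := by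
  obtain ⟨k, ⟨hk1, hkn⟩, rfl⟩ := hrun.2.2.1.surjOn (Set.mem_univ e)
  exact ⟨k, hk1, hrun.lt_of_prec hk1 hkn hj1 hjn he, rfl⟩

theorem RaceFree.prec_of_lt (hrf : T.RaceFree) (hrun : T.IsRun n σ t ν) {c : C} {k j : ℕ}
    (hk1 : 1 ≤ k) (hkj : k < j) (hjn : j ≤ n)
    (hk : T.Dependent (σ k) c) (hj : T.Dependent (σ j) c) : T.prec (σ k) (σ j) := by
  have hkn : k ≤ n := hkj.le.trans hjn
  have hj1 : 1 ≤ j := hk1.trans hkj.le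
  have hne : σ k ≠ σ j := fun h =>
    hkj.ne (hrun.2.2.1.injOn ⟨hk1, hkn⟩ ⟨hj1, hjn⟩ h)
  exact (hrf c _ _ hk hj hne).resolve_right fun h =>
    (hrun.lt_of_prec hj1 hjn hk1 hkn h).not_gt hkj

end TPO

theorem Nat.exists_last_lt {P : ℕ → Prop} {k j : ℕ} (hkj : k < j) (hk : P k) :
    ∃ m, m < j ∧ P m ∧ ∀ i, m < i → i < j → ¬ P i := by
  classical
  let Q i := i < j ∧ P i
  have hQ : Q (Nat.findGreatest Q j) := Nat.findGreatest_spec hkj.le ⟨hkj, hk⟩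
  exact ⟨_, hQ.1, hQ.2, fun i hmi hij hi =>
    (Nat.le_findGreatest hij.le ⟨hij, hi⟩).not_gt hmi⟩

/-- Let `ρ` be a run of a race-free TPO, `j` a position, and `c` a
clock referred to in the guard of `σ_j`. With `E = {e | c ∈ R(e) ∧ e ≺ σ_j}`:
(a) if `E = ∅` then no earlier event of the run resets `c`;
(b) if `E ≠ ∅` then `E` has a `≺`-maximum element, that element occurs at some
position `m < j` of the run, and no event strictly between positions `m` and `j`
resets `c` — i.e., the last reset of `c` before position `j` occurs exactly at the
`≺`-maximum element of `E`. -/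
theorem race_free_last_reset_is_prec_maximum
    {E C : Type} (T : TPO E C) (hrf : T.RaceFree)
    (n : ℕ) (σ : ℕ → E) (t : ℕ → ℝ) (ν : ℕ → C → ℝ)
    (hrun : T.IsRun n σ t ν)
    (j : ℕ) (hj1 : 1 ≤ j) (hjn : j ≤ n)
    (c : C) (hc : ∃ p ∈ T.guard (σ j), p.1 = c) :
    (({e : E | c ∈ T.reset e ∧ T.prec e (σ j)} = ∅) →
        ∀ k, 1 ≤ k → k < j → c ∉ T.reset (σ k)) ∧
    (({e : E | c ∈ T.reset e ∧ T.prec e (σ j)}.Nonempty) →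
        ∃ m, 1 ≤ m ∧ m < j ∧
          σ m ∈ {e : E | c ∈ T.reset e ∧ T.prec e (σ j)} ∧
          (∀ e ∈ {e : E | c ∈ T.reset e ∧ T.prec e (σ j)},
              e = σ m ∨ T.prec e (σ m)) ∧
          (∀ k, m < k → k < j → c ∉ T.reset (σ k))) := by
  have hdep : T.Dependent (σ j) c := Or.inl hc
  refine ⟨fun hE k hk1 hkj hck => ?_, fun ⟨e, he⟩ => ?_⟩
  · exact Set.eq_empty_iff_forall_notMem.mp hE (σ k)
      ⟨hck, hrf.prec_of_lt hrun hk1 hkj hjn (Or.inr hck) hdep⟩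
  obtain ⟨k, hk1, hkj, rfl⟩ := hrun.exists_index_lt_of_prec hj1 hjn he.2
  obtain ⟨m, hmj, ⟨hm1, hmc⟩, hlast⟩ :=
    Nat.exists_last_lt (P := fun i => 1 ≤ i ∧ c ∈ T.reset (σ i)) hkj ⟨hk1, he.1⟩
  have hmax : ∀ i, 1 ≤ i → i < j → c ∈ T.reset (σ i) → i ≤ m := fun i hi1 hij hic =>
    not_lt.mp fun hmi => hlast i hmi hij ⟨hi1, hic⟩
  refine ⟨m, hm1, hmj, ⟨hmc, hrf.prec_of_lt hrun hm1 hmj hjn (Or.inr hmc) hdep⟩, ?_, ?_⟩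
  · intro e' he'
    obtain ⟨i, hi1, hij, rfl⟩ := hrun.exists_index_lt_of_prec hj1 hjn he'.2
    rcases (hmax i hi1 hij he'.1).eq_or_lt with rfl | him
    · exact Or.inl rfl
    · exact Or.inr (hrf.prec_of_lt hrun hi1 him (hmj.le.trans hjn) (Or.inr he'.1) (Or.inr hmc))
  · exact fun i hmi hij hic => hlast i hmi hij ⟨hm1.trans hmi.le, hic⟩
end

section
/- Let ρ: (σ_1, t^{(1)}, ν_1), …, (σ_n, t^{(n)}, ν_n) be a run of a race-free TPO, let j be a position, and let c be a clock referred to in the guard G(σ_j). Define E = { e ∈ Π | c ∈ R(e) and e ≺ σ_j }. Then the value of clock c at the moment the guard of σ_j is checked, namely (ν_{j−1} ⊕ Δt^{(j)})(c), equals t^{(j)} if E = ∅, and equals t^{(j)} − t^{(m)} where σ_m is the ≺-maximum element of E if E ≠ ∅. Consequently, each atomic guard conjunct c ⋈ a of G(σ_j) holds in the run if and only if t^{(j)} ⋈ a (when E = ∅) or t^{(j)} − t^{(m)} ⋈ a (when E ≠ ∅). -/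
/-!
Between two resets a clock just accumulates elapsed time, so its value when the guard of `σ j` is
checked is `t j - t m` for the last position `m < j` resetting it (or `t j` if there is none).
Race-freedom makes every event that resets `c` before position `j` comparable with `σ j`, and the
run being a linearization forces it to lie `≺`-below `σ j`; hence the last reset in the run is
exactly the `≺`-maximum of `{e | c ∈ R(e) ∧ e ≺ σ j}`.
-/

namespace TPO

variable {E C : Type} {T : TPO E C} {n : ℕ} {σ : ℕ → E} {t : ℕ → ℝ} {ν : ℕ → C → ℝ}

def priorResets (T : TPO E C) (c : C) (e : E) : Set E :=
  {e' | c ∈ T.reset e' ∧ T.prec e' e}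

namespace IsRun

theorem time_zero (hrun : T.IsRun n σ t ν) : t 0 = 0 := hrun.1

theorem valuation_zero (hrun : T.IsRun n σ t ν) (c : C) : ν 0 c = 0 := hrun.2.1 c

theorem lt_of_prec_s5 (hrun : T.IsRun n σ t ν) {a b : ℕ} (ha : 1 ≤ a) (han : a ≤ n) (hb : 1 ≤ b)
    (hbn : b ≤ n) (h : T.prec (σ a) (σ b)) : a < b :=
  hrun.2.2.2.2.1 a b ha han hb hbn h

theorem eq_of_apply_eq (hrun : T.IsRun n σ t ν) {a b : ℕ} (ha : 1 ≤ a) (han : a ≤ n) (hb : 1 ≤ b)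
    (hbn : b ≤ n) (h : σ a = σ b) : a = b :=
  hrun.2.2.1.injOn ⟨ha, han⟩ ⟨hb, hbn⟩ h

theorem valuation_eq_zero_of_mem_reset (hrun : T.IsRun n σ t ν) {k : ℕ} (hk : 1 ≤ k)
    (hkn : k ≤ n) {c : C} (hc : c ∈ T.reset (σ k)) : ν k c = 0 :=
  (hrun.2.2.2.2.2.2 k hk hkn c).1 hc

theorem valuation_succ_of_notMem_reset (hrun : T.IsRun n σ t ν) {k : ℕ} (hkn : k + 1 ≤ n)
    {c : C} (hc : c ∉ T.reset (σ (k + 1))) : ν (k + 1) c = ν k c + (t (k + 1) - t k) := by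
  simpa using (hrun.2.2.2.2.2.2 (k + 1) (by omega) hkn c).2 hc

theorem valuation_eq_add_elapsed (hrun : T.IsRun n σ t ν) {c : C} {m k : ℕ} (hmk : m ≤ k)
    (hkn : k ≤ n) (hnr : ∀ i, m < i → i ≤ k → c ∉ T.reset (σ i)) :
    ν k c = ν m c + (t k - t m) := by
  induction k, hmk using Nat.le_induction with
  | base => ring
  | succ k hmk ih =>
    rw [hrun.valuation_succ_of_notMem_reset hkn (hnr _ (by omega) le_rfl),
      ih (by omega) fun i hmi hik => hnr i hmi (by omega)]
    ring

theorem clock_at_check_eq (hrun : T.IsRun n σ t ν) {c : C} {m j : ℕ} (hmj : m < j) (hjn : j ≤ n)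
    (hnr : ∀ i, m < i → i < j → c ∉ T.reset (σ i)) :
    ν (j - 1) c + (t j - t (j - 1)) = ν m c + (t j - t m) := by
  rw [hrun.valuation_eq_add_elapsed (by omega : m ≤ j - 1) (by omega)
    fun i hmi hij => hnr i hmi (by omega)]
  ring

theorem mem_priorResets (hrun : T.IsRun n σ t ν) (hrf : T.RaceFree) {c : C} {i j : ℕ}
    (hi : 1 ≤ i) (hij : i < j) (hjn : j ≤ n) (hdep : T.Dependent (σ j) c)
    (hres : c ∈ T.reset (σ i)) : σ i ∈ T.priorResets c (σ j) := by
  have hne : σ i ≠ σ j := fun h => hij.ne (hrun.eq_of_apply_eq hi (by omega) (by omega) hjn h)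
  refine ⟨hres, (hrf c _ _ (Or.inr hres) hdep hne).resolve_right fun hji => ?_⟩
  exact absurd (hrun.lt_of_prec_s5 (by omega) hjn hi (by omega) hji) (by omega)

theorem clock_at_check_of_priorResets_eq_empty (hrun : T.IsRun n σ t ν) (hrf : T.RaceFree)
    {c : C} {j : ℕ} (hj1 : 1 ≤ j) (hjn : j ≤ n) (hdep : T.Dependent (σ j) c)
    (hE : T.priorResets c (σ j) = ∅) : ν (j - 1) c + (t j - t (j - 1)) = t j := by
  have hnr : ∀ i, 0 < i → i < j → c ∉ T.reset (σ i) := fun i hi hij hres => by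
    simpa [hE] using hrun.mem_priorResets hrf hi hij hjn hdep hres
  rw [hrun.clock_at_check_eq (by omega) hjn hnr, hrun.valuation_zero, hrun.time_zero]
  ring

theorem clock_at_check_of_isMax_priorResets (hrun : T.IsRun n σ t ν) (hrf : T.RaceFree)
    {c : C} {j : ℕ} (hj1 : 1 ≤ j) (hjn : j ≤ n) (hdep : T.Dependent (σ j) c) {m : ℕ}
    (hm1 : 1 ≤ m) (hmn : m ≤ n) (hmem : σ m ∈ T.priorResets c (σ j))
    (hmax : ∀ e ∈ T.priorResets c (σ j), e = σ m ∨ T.prec e (σ m)) :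
    ν (j - 1) c + (t j - t (j - 1)) = t j - t m := by
  have hnr : ∀ i, m < i → i < j → c ∉ T.reset (σ i) := by
    intro i hmi hij hres
    rcases hmax _ (hrun.mem_priorResets hrf (by omega) hij hjn hdep hres) with h | h
    · exact hmi.ne' (hrun.eq_of_apply_eq (by omega) (by omega) hm1 hmn h)
    · exact absurd (hrun.lt_of_prec_s5 (by omega) (by omega) hm1 hmn h) (by omega)
  have hmj : m < j := hrun.lt_of_prec_s5 hm1 hmn hj1 hjn hmem.2
  rw [hrun.clock_at_check_eq hmj hjn hnr, hrun.valuation_eq_zero_of_mem_reset hm1 hmn hmem.1]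
  ring

end IsRun

end TPO

/-- Let `ρ` be a run of a race-free TPO, `j` a position, and `c` a
clock referred to in the guard of `σ_j`. With `E = {e | c ∈ R(e) ∧ e ≺ σ_j}`, the
value of `c` when the guard of `σ_j` is checked, namely `(ν_{j−1} ⊕ Δt^{(j)})(c)`,
equals `t^{(j)}` if `E = ∅`, and equals `t^{(j)} − t^{(m)}` where `σ_m` is the
`≺`-maximum of `E` otherwise. Consequently each atomic guard conjunct `c ⋈ a` of
`G(σ_j)` holds in the run iff `t^{(j)} ⋈ a` (when `E = ∅`), respectively
`t^{(j)} − t^{(m)} ⋈ a` (when `E ≠ ∅`). -/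
theorem race_free_clock_value_at_guard_check
    {E C : Type} (T : TPO E C) (hrf : T.RaceFree)
    (n : ℕ) (σ : ℕ → E) (t : ℕ → ℝ) (ν : ℕ → C → ℝ)
    (hrun : T.IsRun n σ t ν)
    (j : ℕ) (hj1 : 1 ≤ j) (hjn : j ≤ n)
    (c : C) (hc : ∃ p ∈ T.guard (σ j), p.1 = c) :
    (({e : E | c ∈ T.reset e ∧ T.prec e (σ j)} = ∅) →
        ν (j - 1) c + (t j - t (j - 1)) = t j) ∧
    (∀ m, 1 ≤ m → m ≤ n →
        σ m ∈ {e : E | c ∈ T.reset e ∧ T.prec e (σ j)} →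
        (∀ e ∈ {e : E | c ∈ T.reset e ∧ T.prec e (σ j)},
            e = σ m ∨ T.prec e (σ m)) →
        ν (j - 1) c + (t j - t (j - 1)) = t j - t m) ∧
    (∀ p ∈ T.guard (σ j), p.1 = c →
        (({e : E | c ∈ T.reset e ∧ T.prec e (σ j)} = ∅) →
            (p.2.1.holds (ν (j - 1) c + (t j - t (j - 1))) p.2.2 ↔
              p.2.1.holds (t j) p.2.2)) ∧
        (∀ m, 1 ≤ m → m ≤ n →
            σ m ∈ {e : E | c ∈ T.reset e ∧ T.prec e (σ j)} →
            (∀ e ∈ {e : E | c ∈ T.reset e ∧ T.prec e (σ j)},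
                e = σ m ∨ T.prec e (σ m)) →
            (p.2.1.holds (ν (j - 1) c + (t j - t (j - 1))) p.2.2 ↔
              p.2.1.holds (t j - t m) p.2.2))) := by
  have hdep : T.Dependent (σ j) c := Or.inl hc
  have hempty := hrun.clock_at_check_of_priorResets_eq_empty hrf hj1 hjn hdep
  have hlast (m : ℕ) := hrun.clock_at_check_of_isMax_priorResets hrf hj1 hjn hdep (m := m)
  refine ⟨hempty, hlast, fun p _ _ => ⟨fun hE => ?_, fun m hm1 hmn hmem hmax => ?_⟩⟩
  · rw [hempty hE]
  · rw [hlast m hm1 hmn hmem hmax]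
end

section
/- Let a race-free TPO arise from the dedicated-clock construction for a constraint set S: clock c_i is reset exactly at event e_i, and every guard conjunct on c_i occurs at some event e_k with e_i ≺ e_k and corresponds to an inequality (t_k − t_i) ⋈ a in S. For a clock c_i, let L(i) denote the ≺-supremum of E_i = { e_k | some inequality (t_k − t_i) ⋈ a is in S }, assumed to exist. Suppose two distinct clocks c_i and c_j satisfy L(i) ⪯ e_j. Then the TPO obtained by replacing every occurrence of c_j by c_i (in both resets and guards, deleting clock c_j) is race-free and has exactly the same set of compatible timed traces as the original TPO. -/
/-!
Just before an event, the value of a clock in a run is the time since its last reset, so it is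
determined by the positions at which the clock is reset (`TPO.clockRun`). Every event depending on
`c_i` is `⪯ e_j`, while `c_j` is reset exactly at `e_j` and guarded only after it. In any
linearization, a guard on `c_i` therefore comes before the extra reset at `e_j` introduced by the
merge, and a guard on `c_j` sees the merged clock last reset at `e_j`, as `c_j` was; so the two
TPOs check their guards against the same values. The chain
`dependents of c_i ⪯ e_j ⪯ dependents of c_j` also makes the merged clock race-free.
-/

variable {E C C' : Type}

def replaceClock [DecidableEq C] (ci cj c : C) : C := if c = cj then ci else c

section replaceClock

variable [DecidableEq C] {ci cj c : C}

@[simp]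
lemma replaceClock_self : replaceClock ci cj cj = ci := if_pos rfl

lemma replaceClock_of_ne (h : c ≠ cj) : replaceClock ci cj c = c := if_neg h

lemma replaceClock_eq_replaceClock {a b : C} (h : replaceClock ci cj a = replaceClock ci cj b) :
    a = b ∨ (a = ci ∧ b = cj) ∨ (a = cj ∧ b = ci) := by
  unfold replaceClock at h
  split_ifs at h <;> simp_all

lemma mem_image_replaceClock_self {R : Set C} :
    ci ∈ replaceClock ci cj '' R ↔ ci ∈ R ∨ cj ∈ R := by
  constructor
  · rintro ⟨c, hc, hci⟩
    by_cases hcj : c = cj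
    · exact Or.inr (hcj ▸ hc)
    · rw [replaceClock_of_ne hcj] at hci
      exact Or.inl (hci ▸ hc)
  · rintro (hc | hc)
    · by_cases hcj : ci = cj
      · exact ⟨cj, hcj ▸ hc, replaceClock_self⟩
      · exact ⟨ci, hc, replaceClock_of_ne hcj⟩
    · exact ⟨cj, hc, replaceClock_self⟩

lemma mem_image_replaceClock_of_ne {R : Set C} (hi : c ≠ ci) (hj : c ≠ cj) :
    c ∈ replaceClock ci cj '' R ↔ c ∈ R := by
  constructor
  · rintro ⟨c', hc', rfl⟩
    by_cases hc'j : c' = cj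
    · exact absurd (by rw [hc'j, replaceClock_self]) hi
    · rwa [replaceClock_of_ne hc'j]
  · exact fun hc => ⟨c, hc, replaceClock_of_ne hj⟩

end replaceClock

structure IsLinearization (r : E → E → Prop) (N : ℕ) (σ : ℕ → E) : Prop where
  bijOn : Set.BijOn σ (Set.Icc 1 N) Set.univ
  lt_of_rel : ∀ a b, 1 ≤ a → a ≤ N → 1 ≤ b → b ≤ N → r (σ a) (σ b) → a < b

namespace IsLinearization

variable {r : E → E → Prop} {N : ℕ} {σ : ℕ → E}

lemma exists_eq (hσ : IsLinearization r N σ) (e : E) : ∃ a, 1 ≤ a ∧ a ≤ N ∧ σ a = e := by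
  obtain ⟨a, ⟨h1, h2⟩, ha⟩ := hσ.bijOn.surjOn (Set.mem_univ e)
  exact ⟨a, h1, h2, ha⟩

lemma eq_of_eq (hσ : IsLinearization r N σ) {a b : ℕ} (ha : 1 ≤ a) (haN : a ≤ N) (hb : 1 ≤ b)
    (hbN : b ≤ N) (h : σ a = σ b) : a = b :=
  hσ.bijOn.injOn ⟨ha, haN⟩ ⟨hb, hbN⟩ h

end IsLinearization

namespace TPO

def GuardsHold (T : TPO E C) (ν : C → ℝ) (d : ℝ) (e : E) : Prop :=
  ∀ p ∈ T.guard e, p.2.1.holds (ν p.1 + d) p.2.2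

open Classical in
noncomputable def clockRun (T : TPO E C) (σ : ℕ → E) (t : ℕ → ℝ) : ℕ → C → ℝ
  | 0, _ => 0
  | m + 1, c => if c ∈ T.reset (σ (m + 1)) then 0 else T.clockRun σ t m c + (t (m + 1) - t m)

section clockRun

variable (T : TPO E C) (σ : ℕ → E) (t : ℕ → ℝ) {c : C} {m : ℕ}

lemma clockRun_of_mem_reset (hm : 1 ≤ m) (hc : c ∈ T.reset (σ m)) : T.clockRun σ t m c = 0 := by
  obtain ⟨m, rfl⟩ := Nat.exists_eq_add_of_le' hm
  simp [clockRun, hc]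

lemma clockRun_of_notMem_reset (hm : 1 ≤ m) (hc : c ∉ T.reset (σ m)) :
    T.clockRun σ t m c = T.clockRun σ t (m - 1) c + (t m - t (m - 1)) := by
  obtain ⟨m, rfl⟩ := Nat.exists_eq_add_of_le' hm
  simp [clockRun, hc]

lemma clockRun_eq_of_reset_iff {T' : TPO E C'} {c' : C'} {a : ℕ} (ham : a ≤ m)
    (ha : T.clockRun σ t a c = T'.clockRun σ t a c')
    (hres : ∀ k, a < k → k ≤ m → (c ∈ T.reset (σ k) ↔ c' ∈ T'.reset (σ k))) :
    T.clockRun σ t m c = T'.clockRun σ t m c' := by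
  induction m, ham using Nat.le_induction with
  | base => exact ha
  | succ m ham ih =>
    have ih := ih fun k hak hkm => hres k hak (by omega)
    by_cases hc : c ∈ T.reset (σ (m + 1))
    · rw [clockRun_of_mem_reset T σ t (by omega) hc,
        clockRun_of_mem_reset T' σ t (by omega) ((hres _ (by omega) le_rfl).1 hc)]
    · rw [clockRun_of_notMem_reset T σ t (by omega) hc,
        clockRun_of_notMem_reset T' σ t (by omega) (by rwa [← hres _ (by omega) le_rfl]),
        Nat.add_sub_cancel, ih]

end clockRun

lemma IsRun.eq_clockRun {T : TPO E C} {N : ℕ} {σ : ℕ → E} {t : ℕ → ℝ} {ν : ℕ → C → ℝ}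
    (hrun : T.IsRun N σ t ν) : ∀ m ≤ N, ν m = T.clockRun σ t m := by
  obtain ⟨-, hν0, -, -, -, -, hstep⟩ := hrun
  intro m hm
  induction m with
  | zero => exact funext hν0
  | succ m ih =>
    funext c
    obtain ⟨hmem, hnotMem⟩ := hstep (m + 1) (by omega) hm c
    by_cases hc : c ∈ T.reset (σ (m + 1))
    · rw [hmem hc, clockRun_of_mem_reset T σ t (by omega) hc]
    · rw [hnotMem hc, clockRun_of_notMem_reset T σ t (by omega) hc, Nat.add_sub_cancel,
        ih (by omega)]

lemma Compatible.of_guardsHold [Fintype E] {T : TPO E C} {T' : TPO E C'} {τ : E → ℝ}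
    (hprec : T'.prec = T.prec)
    (hguard : ∀ σ t, IsLinearization T.prec (Fintype.card E) σ →
      ∀ m, 1 ≤ m → m ≤ Fintype.card E →
        T.GuardsHold (T.clockRun σ t (m - 1)) (t m - t (m - 1)) (σ m) →
        T'.GuardsHold (T'.clockRun σ t (m - 1)) (t m - t (m - 1)) (σ m))
    (hτ : T.Compatible τ) : T'.Compatible τ := by
  obtain ⟨σ, t, ν, hτσ, hmono, hrun⟩ := hτ
  have hν := hrun.eq_clockRun
  obtain ⟨ht0, -, hbij, hstep, hlin, hg, -⟩ := hrun
  refine ⟨σ, t, T'.clockRun σ t, hτσ, hmono, ht0, fun _ => rfl, hbij, hstep, hprec ▸ hlin,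
    fun m hm hmN => hguard σ t ⟨hbij, hlin⟩ m hm hmN ?_,
    fun m hm _ c => ⟨T'.clockRun_of_mem_reset σ t hm, T'.clockRun_of_notMem_reset σ t hm⟩⟩
  rw [← hν (m - 1) (by omega)]
  exact hg m hm hmN

structure ReplacesClock [DecidableEq C] (T' T : TPO E C) (ci cj : C) : Prop where
  prec_eq : T'.prec = T.prec
  reset_eq : ∀ e, T'.reset e = replaceClock ci cj '' T.reset e
  mem_guard : ∀ e p, p ∈ T'.guard e ↔ ∃ p' ∈ T.guard e, p = (replaceClock ci cj p'.1, p'.2)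

/-- The condition `L(i) ⪯ e_j` of the dedicated-clock construction, stated for an arbitrary TPO. -/
structure CanReuse (T : TPO E C) (ci cj : C) (ej : E) : Prop where
  reset_iff : ∀ e, cj ∈ T.reset e ↔ e = ej
  prec_of_guard : ∀ e, ∀ p ∈ T.guard e, p.1 = cj → T.prec ej e
  le_of_dependent : ∀ e, T.Dependent e ci → e = ej ∨ T.prec e ej

lemma CanReuse.le_of_dependent_right {T : TPO E C} {ci cj : C} {ej e : E}
    (hr : T.CanReuse ci cj ej) (he : T.Dependent e cj) : e = ej ∨ T.prec ej e := by
  rcases he with ⟨p, hp, hpj⟩ | he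
  · exact Or.inr (hr.prec_of_guard e p hp hpj)
  · exact Or.inl ((hr.reset_iff e).1 he)

namespace ReplacesClock

variable [DecidableEq C] {T T' : TPO E C} {ci cj : C} {ej : E}

lemma dependent_iff (h : T'.ReplacesClock T ci cj) {e : E} {c : C} :
    T'.Dependent e c ↔ ∃ c', replaceClock ci cj c' = c ∧ T.Dependent e c' := by
  constructor
  · rintro (⟨p, hp, rfl⟩ | hc)
    · obtain ⟨p', hp', rfl⟩ := (h.mem_guard e p).1 hp
      exact ⟨p'.1, rfl, Or.inl ⟨p', hp', rfl⟩⟩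
    · rw [h.reset_eq] at hc
      obtain ⟨c', hc', rfl⟩ := hc
      exact ⟨c', rfl, Or.inr hc'⟩
  · rintro ⟨c', rfl, ⟨p', hp', rfl⟩ | hc'⟩
    · exact Or.inl ⟨_, (h.mem_guard e _).2 ⟨p', hp', rfl⟩, rfl⟩
    · exact Or.inr (h.reset_eq e ▸ ⟨c', hc', rfl⟩)

theorem raceFree (h : T'.ReplacesClock T ci cj) (hr : T.CanReuse ci cj ej)
    (hrf : T.RaceFree) : T'.RaceFree := by
  have cross : ∀ e₁ e₂, T.Dependent e₁ ci → T.Dependent e₂ cj → e₁ ≠ e₂ → T.prec e₁ e₂ := by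
    intro e₁ e₂ h₁ h₂ hne
    rcases hr.le_of_dependent e₁ h₁ with rfl | h₁ <;>
      rcases hr.le_of_dependent_right h₂ with rfl | h₂
    exacts [absurd rfl hne, h₂, h₁, T.prec_trans _ _ _ h₁ h₂]
  intro c e₁ e₂ h₁ h₂ hne
  obtain ⟨c₁, rfl, d₁⟩ := h.dependent_iff.1 h₁
  obtain ⟨c₂, hc, d₂⟩ := h.dependent_iff.1 h₂
  rw [h.prec_eq]
  rcases replaceClock_eq_replaceClock hc.symm with rfl | ⟨rfl, rfl⟩ | ⟨rfl, rfl⟩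
  · exact hrf c₁ e₁ e₂ d₁ d₂ hne
  · exact Or.inl (cross e₁ e₂ d₁ d₂ hne)
  · exact Or.inr (cross e₂ e₁ d₂ d₁ hne.symm)

lemma guardsHold_iff (h : T'.ReplacesClock T ci cj) {ν' ν : C → ℝ} {d : ℝ} {e : E}
    (hν : ∀ p ∈ T.guard e, ν' (replaceClock ci cj p.1) = ν p.1) :
    T'.GuardsHold ν' d e ↔ T.GuardsHold ν d e := by
  constructor
  · intro H p hp
    have := H _ ((h.mem_guard e _).2 ⟨p, hp, rfl⟩)
    rwa [hν p hp] at this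
  · intro H p hp
    obtain ⟨p', hp', rfl⟩ := (h.mem_guard e p).1 hp
    simpa only [hν p' hp'] using H p' hp'

variable (σ : ℕ → E) (t : ℕ → ℝ) {m : ℕ}

lemma clockRun_of_ne (h : T'.ReplacesClock T ci cj) {c : C} (hi : c ≠ ci) (hj : c ≠ cj) :
    T'.clockRun σ t m c = T.clockRun σ t m c :=
  T'.clockRun_eq_of_reset_iff σ t (Nat.zero_le m) rfl fun k _ _ => by
    rw [h.reset_eq, mem_image_replaceClock_of_ne hi hj]

lemma clockRun_self_of_notMem (h : T'.ReplacesClock T ci cj)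
    (hj : ∀ k, 1 ≤ k → k ≤ m → cj ∉ T.reset (σ k)) :
    T'.clockRun σ t m ci = T.clockRun σ t m ci :=
  T'.clockRun_eq_of_reset_iff σ t (Nat.zero_le m) rfl fun k hk hkm => by
    rw [h.reset_eq, mem_image_replaceClock_self, or_iff_left (hj k hk hkm)]

lemma clockRun_self_eq_clockRun (h : T'.ReplacesClock T ci cj) {a : ℕ} (ha : 1 ≤ a)
    (ham : a ≤ m) (hja : cj ∈ T.reset (σ a))
    (hk : ∀ k, a < k → k ≤ m → ci ∉ T.reset (σ k) ∧ cj ∉ T.reset (σ k)) :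
    T'.clockRun σ t m ci = T.clockRun σ t m cj := by
  refine T'.clockRun_eq_of_reset_iff σ t ham ?_ fun k hak hkm => ?_
  · rw [T.clockRun_of_mem_reset σ t ha hja, T'.clockRun_of_mem_reset σ t ha
      (by rw [h.reset_eq, mem_image_replaceClock_self]; exact Or.inr hja)]
  · rw [h.reset_eq, mem_image_replaceClock_self]
    simp [hk k hak hkm]

lemma clockRun_replaceClock (h : T'.ReplacesClock T ci cj) (hr : T.CanReuse ci cj ej) {N : ℕ}
    (hσ : IsLinearization T.prec N σ) (hm : 1 ≤ m) (hmN : m ≤ N) {p : C × Cmp × ℝ}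
    (hp : p ∈ T.guard (σ m)) :
    T'.clockRun σ t (m - 1) (replaceClock ci cj p.1) = T.clockRun σ t (m - 1) p.1 := by
  obtain ⟨a, ha, haN, hσa⟩ := hσ.exists_eq ej
  have not_ej : ∀ k, 1 ≤ k → k ≤ N → k ≠ a → cj ∉ T.reset (σ k) := fun k hk hkN hka hres =>
    hka (hσ.eq_of_eq hk hkN ha haN (((hr.reset_iff _).1 hres).trans hσa.symm))
  by_cases hpj : p.1 = cj
  · have ham : a < m := hσ.lt_of_rel a m ha haN hm hmN (hσa ▸ hr.prec_of_guard _ p hp hpj)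
    rw [hpj, replaceClock_self]
    refine h.clockRun_self_eq_clockRun σ t ha (by omega) ((hr.reset_iff _).2 hσa)
      fun k hak hkm => ⟨fun hres => ?_, not_ej k (by omega) (by omega) hak.ne'⟩
    rcases hr.le_of_dependent _ (Or.inr hres) with he | he
    · exact not_ej k (by omega) (by omega) hak.ne' ((hr.reset_iff _).2 he)
    · exact absurd (hσ.lt_of_rel k a (by omega) (by omega) ha haN (hσa ▸ he)) (by omega)
  by_cases hpi : p.1 = ci
  · have hma : m ≤ a := by
      rcases hr.le_of_dependent _ (Or.inl ⟨p, hp, hpi⟩) with he | he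
      · exact (hσ.eq_of_eq hm hmN ha haN (he.trans hσa.symm)).le
      · exact (hσ.lt_of_rel m a hm hmN ha haN (hσa ▸ he)).le
    rw [replaceClock_of_ne hpj, hpi]
    exact h.clockRun_self_of_notMem σ t fun k hk hkm => not_ej k hk (by omega) (by omega)
  · rw [replaceClock_of_ne hpj]
    exact h.clockRun_of_ne σ t hpi hpj

theorem compatible_iff [Fintype E] (h : T'.ReplacesClock T ci cj) (hr : T.CanReuse ci cj ej)
    {τ : E → ℝ} : T'.Compatible τ ↔ T.Compatible τ := by
  have guards : ∀ σ t, IsLinearization T.prec (Fintype.card E) σ →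
      ∀ m, 1 ≤ m → m ≤ Fintype.card E →
        (T'.GuardsHold (T'.clockRun σ t (m - 1)) (t m - t (m - 1)) (σ m) ↔
          T.GuardsHold (T.clockRun σ t (m - 1)) (t m - t (m - 1)) (σ m)) :=
    fun σ t hσ _ hm hmN => h.guardsHold_iff fun _ hp => h.clockRun_replaceClock σ t hr hσ hm hmN hp
  exact ⟨Compatible.of_guardsHold h.prec_eq.symm fun σ t hσ m hm hmN =>
      (guards σ t (h.prec_eq ▸ hσ) m hm hmN).1,
    Compatible.of_guardsHold h.prec_eq fun σ t hσ m hm hmN => (guards σ t hσ m hm hmN).2⟩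

end ReplacesClock

end TPO

theorem clock_reuse_preserves_race_freedom_and_traces_general
    {n : ℕ} (prec : Fin n → Fin n → Prop)
    (htrans : ∀ e₁ e₂ e₃, prec e₁ e₂ → prec e₂ e₃ → prec e₁ e₃)
    (S : Finset (Fin n × Option (Fin n) × Cmp × ℝ))
    (hS : ∀ q ∈ S, (0 : ℝ) ≤ q.2.2.2 ∧ ∀ i', q.2.1 = some i' → prec i' q.1)
    (T : TPO (Fin n) (Option (Fin n)))
    (hTprec : T.prec = prec)
    (hTreset : ∀ k : Fin n,
        T.reset k = {c : Option (Fin n) | c = some k ∧ ∃ q ∈ S, q.2.1 = some k})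
    (hTguard : ∀ (k : Fin n) (p : Option (Fin n) × Cmp × ℝ),
        p ∈ T.guard k ↔ (k, p) ∈ S)
    (hrf : T.RaceFree)
    (i j : Fin n)
    (hj : ∃ q ∈ S, q.2.1 = some j)
    (Li : Fin n)
    (hL_ub : ∀ k : Fin n, (∃ q ∈ S, q.1 = k ∧ q.2.1 = some i) →
        (prec k Li ∨ k = Li))
    (hreuse : prec Li j ∨ Li = j)
    (T' : TPO (Fin n) (Option (Fin n)))
    (hT'prec : T'.prec = prec)
    (hT'reset : ∀ k : Fin n,
        T'.reset k =
          (fun c : Option (Fin n) => if c = some j then some i else c) '' T.reset k)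
    (hT'guard : ∀ (k : Fin n) (p : Option (Fin n) × Cmp × ℝ),
        p ∈ T'.guard k ↔
          ∃ p' ∈ T.guard k,
            p = ((if p'.1 = some j then some i else p'.1), p'.2)) :
    T'.RaceFree ∧
    ∀ τ : Fin n → ℝ, (∀ e, 0 ≤ τ e) → Function.Injective τ →
      (T'.Compatible τ ↔ T.Compatible τ) := by
  have hrep : T'.ReplacesClock T (some i) (some j) :=
    ⟨hT'prec.trans hTprec.symm, hT'reset, hT'guard⟩
  have le_j : ∀ k, (∃ q ∈ S, q.1 = k ∧ q.2.1 = some i) → k = j ∨ prec k j := fun k hk => by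
    rcases hL_ub k hk with hk | rfl
    · exact Or.inr (hreuse.elim (htrans _ _ _ hk) (· ▸ hk))
    · exact hreuse.symm
  have hcan : T.CanReuse (some i) (some j) j := by
    refine ⟨fun e => ?_, fun e p hp hpj => ?_, fun e he => ?_⟩
    · simp only [hTreset, Set.mem_ofPred_eq, Option.some_inj]
      exact ⟨fun h => h.1.symm, fun h => ⟨h.symm, h ▸ hj⟩⟩
    · exact hTprec ▸ (hS _ ((hTguard e p).1 hp)).2 j hpj
    rw [hTprec]
    rcases he with ⟨p, hp, hpi⟩ | he
    · exact le_j e ⟨_, (hTguard e p).1 hp, rfl, hpi⟩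
    · rw [hTreset] at he
      obtain ⟨hei, q, hq, hqi⟩ := he
      obtain rfl : i = e := Option.some_inj.1 hei
      have hiq := (hS q hq).2 i hqi
      exact Or.inr ((le_j q.1 ⟨q, hq, rfl, hqi⟩).elim (· ▸ hiq) (htrans _ _ _ hiq))
  exact ⟨hrep.raceFree hcan hrf, fun _ _ _ => hrep.compatible_iff hcan⟩

/-- Let a race-free TPO `T` arise from the dedicated-clock
construction for a constraint set `S` (clock type `Option (Fin n)`, `none` being the
never-reset clock `c₀`; clock `c_i` is reset exactly at event `e_i`, and every guard
conjunct on `c_i` occurs at an event `e_k` with `e_i ≺ e_k` corresponding to an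
inequality `(t_k − t_i) ⋈ a` of `S`). Let `L i` be the `≺`-supremum (assumed to
exist) of `E_i = {e_k | some (t_k − t_i) ⋈ a is in S}`. If two distinct clocks
`c_i, c_j` satisfy `L i ⪯ e_j`, then the TPO `T'` obtained from `T` by replacing
every occurrence of `c_j` by `c_i` (in both resets and guards, deleting `c_j`) is
race-free and has exactly the same compatible timed traces as `T`. -/
theorem clock_reuse_preserves_race_freedom_and_traces
    {n : ℕ} (prec : Fin n → Fin n → Prop)
    (hirr : ∀ e, ¬ prec e e)
    (htrans : ∀ e₁ e₂ e₃, prec e₁ e₂ → prec e₂ e₃ → prec e₁ e₃)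
    (S : Finset (Fin n × Option (Fin n) × Cmp × ℝ))
    (hS : ∀ q ∈ S, (0 : ℝ) ≤ q.2.2.2 ∧ ∀ i', q.2.1 = some i' → prec i' q.1)
    (T : TPO (Fin n) (Option (Fin n)))
    (hTprec : T.prec = prec)
    (hTreset : ∀ k : Fin n,
        T.reset k = {c : Option (Fin n) | c = some k ∧ ∃ q ∈ S, q.2.1 = some k})
    (hTguard : ∀ (k : Fin n) (p : Option (Fin n) × Cmp × ℝ),
        p ∈ T.guard k ↔ (k, p) ∈ S)
    (hrf : T.RaceFree)
    (i j : Fin n) (hij : i ≠ j)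
    (hi : ∃ q ∈ S, q.2.1 = some i) (hj : ∃ q ∈ S, q.2.1 = some j)
    (Li : Fin n)
    (hL_ub : ∀ k : Fin n, (∃ q ∈ S, q.1 = k ∧ q.2.1 = some i) →
        (prec k Li ∨ k = Li))
    (hL_least : ∀ x : Fin n,
        (∀ k : Fin n, (∃ q ∈ S, q.1 = k ∧ q.2.1 = some i) → (prec k x ∨ k = x)) →
        (prec Li x ∨ Li = x))
    (hreuse : prec Li j ∨ Li = j)
    (T' : TPO (Fin n) (Option (Fin n)))
    (hT'prec : T'.prec = prec)
    (hT'reset : ∀ k : Fin n,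
        T'.reset k =
          (fun c : Option (Fin n) => if c = some j then some i else c) '' T.reset k)
    (hT'guard : ∀ (k : Fin n) (p : Option (Fin n) × Cmp × ℝ),
        p ∈ T'.guard k ↔
          ∃ p' ∈ T.guard k,
            p = ((if p'.1 = some j then some i else p'.1), p'.2)) :
    T'.RaceFree ∧
    ∀ τ : Fin n → ℝ, (∀ e, 0 ≤ τ e) → Function.Injective τ →
      (T'.Compatible τ ↔ T.Compatible τ) :=
  clock_reuse_preserves_race_freedom_and_traces_general prec htrans S hS T hTprec hTreset hTguard
    hrf i j hj Li hL_ub hreuse T' hT'prec hT'reset hT'guard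
end
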